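/- arXiv:1403.4357 — 2 statements merged into one kernel-verified Lean document; each statement's English description precedes it below -/
import Mathlib

section
/- Let c > 0, d₀ > 0, v > 0, α > 0 and P̄ > 0, T > 0 be real numbers, and define N(τ) := c·(d₀² + v²τ²)^{α/2}. Then there exists a unique t₁ > 0 such that ∫₀^{t₁} (N(t₁) − N(τ)) dτ = P̄·T. (This is the water-filling cutoff time: the time after which the water-filling power allocation transmits nothing.) -/
open intervalIntegral Filter Set

/-- The water-filling cutoff time exists and is unique: with
`N(τ) = c * (d₀² + v²τ²)^(α/2)`, there is a unique `t₁ > 0` such that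
`∫₀^{t₁} (N(t₁) - N(τ)) dτ = Pbar * T`. -/
theorem water_filling_cutoff (c d₀ v α Pbar T : ℝ)
    (hc : 0 < c) (hd₀ : 0 < d₀) (hv : 0 < v) (hα : 0 < α)
    (hPbar : 0 < Pbar) (hT : 0 < T)
    (N : ℝ → ℝ) (hN : ∀ τ, N τ = c * (d₀ ^ 2 + v ^ 2 * τ ^ 2) ^ (α / 2)) :
    ∃! t₁ : ℝ, 0 < t₁ ∧ (∫ τ in (0 : ℝ)..t₁, (N t₁ - N τ)) = Pbar * T := by
  have hgpos : ∀ τ : ℝ, 0 < d₀ ^ 2 + v ^ 2 * τ ^ 2 := fun τ => by positivity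
  have hNcont : Continuous N := by
    have : Continuous fun τ : ℝ => c * (d₀ ^ 2 + v ^ 2 * τ ^ 2) ^ (α / 2) := by
      apply continuous_const.mul
      apply Continuous.rpow_const (by continuity)
      exact fun x => Or.inl (hgpos x).ne'
    simpa [funext hN] using this
  have hNmono : ∀ s t : ℝ, 0 ≤ s → s ≤ t → N s ≤ N t := by
    intro s t hs hst
    rw [hN, hN]
    apply mul_le_mul_of_nonneg_left _ hc.le
    apply Real.rpow_le_rpow (hgpos s).le _ (by positivity)
    nlinarith [mul_nonneg (sub_nonneg.mpr hst) (by linarith : (0:ℝ) ≤ t + s), sq_nonneg v]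
  have hNsmono : ∀ s t : ℝ, 0 ≤ s → s < t → N s < N t := by
    intro s t hs hst
    rw [hN, hN]
    apply mul_lt_mul_of_pos_left _ hc
    apply Real.rpow_lt_rpow (hgpos s).le _ (by positivity)
    have h1 : 0 < t + s := by linarith
    have h2 : 0 < t - s := by linarith
    nlinarith [mul_pos h2 h1, sq_nonneg v, mul_pos (mul_pos hv hv) (mul_pos h2 h1)]
  have hint : ∀ a b : ℝ, IntervalIntegrable N MeasureTheory.volume a b :=
    fun a b => hNcont.intervalIntegrable a b
  set G : ℝ → ℝ := fun t => t * N t - ∫ τ in (0:ℝ)..t, N τ with hGdef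
  have hFG : ∀ t : ℝ, (∫ τ in (0:ℝ)..t, (N t - N τ)) = G t := by
    intro t
    rw [intervalIntegral.integral_sub (intervalIntegrable_const) (hint 0 t)]
    simp [hGdef, mul_comm]
  have hG0 : G 0 = 0 := by simp [hGdef]
  have hGdiff : ∀ s t : ℝ, 0 ≤ s → s ≤ t → s * (N t - N s) ≤ G t - G s := by
    intro s t hs hst
    have hsplit : (∫ τ in (0:ℝ)..t, N τ) = (∫ τ in (0:ℝ)..s, N τ) + ∫ τ in s..t, N τ :=
      (intervalIntegral.integral_add_adjacent_intervals (hint 0 s) (hint s t)).symm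
    have hle : (∫ τ in s..t, N τ) ≤ ∫ τ in s..t, N t := by
      apply intervalIntegral.integral_mono_on hst (hint s t) intervalIntegrable_const
      intro τ hτ
      exact hNmono τ t (hs.trans hτ.1) hτ.2
    rw [intervalIntegral.integral_const, smul_eq_mul] at hle
    simp only [hGdef]
    nlinarith
  have hGmono : StrictMonoOn G (Set.Ici (0:ℝ)) := by
    intro s hs t ht hst
    simp only [Set.mem_Ici] at hs ht
    have ht0 : 0 < t := lt_of_le_of_lt hs hst
    set m := (s + t) / 2 with hm
    have hm0 : 0 < m := by simp only [hm]; linarith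
    have h1 := hGdiff s m hs (by simp only [hm]; linarith)
    have h2 := hGdiff m t hm0.le (by simp only [hm]; linarith)
    have hNm : N m < N t := hNsmono m t hm0.le (by simp only [hm]; linarith)
    have hNs : N s ≤ N m := hNmono s m hs (by simp only [hm]; linarith)
    nlinarith [mul_pos hm0 (sub_pos.mpr hNm), mul_nonneg hs (sub_nonneg.mpr hNs)]
  have hGcont : Continuous G := by
    apply (continuous_id.mul hNcont).sub
    exact intervalIntegral.continuous_primitive hint 0
  -- N tends to infinity
  have hNtop : Tendsto N atTop atTop := by
    have h1 : Tendsto (fun t : ℝ => t ^ 2) atTop atTop := tendsto_pow_atTop two_ne_zero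
    have h2 : Tendsto (fun t : ℝ => v ^ 2 * t ^ 2) atTop atTop :=
      h1.const_mul_atTop (by positivity)
    have h3 : Tendsto (fun t : ℝ => d₀ ^ 2 + v ^ 2 * t ^ 2) atTop atTop :=
      tendsto_atTop_add_const_left atTop _ h2
    have h4 : Tendsto (fun t : ℝ => (d₀ ^ 2 + v ^ 2 * t ^ 2) ^ (α / 2)) atTop atTop :=
      (tendsto_rpow_atTop (by positivity)).comp h3
    have h5 : Tendsto (fun t : ℝ => c * (d₀ ^ 2 + v ^ 2 * t ^ 2) ^ (α / 2)) atTop atTop :=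
      h4.const_mul_atTop hc
    simpa [funext hN] using h5
  obtain ⟨M, hM⟩ : ∃ M : ℝ, 1 ≤ M ∧ Pbar * T + N 1 ≤ N M := by
    have := (eventually_ge_atTop (1:ℝ)).and (hNtop.eventually_ge_atTop (Pbar * T + N 1))
    exact this.exists
  obtain ⟨hM1, hMN⟩ := hM
  have hG1 : 0 ≤ G 1 := by
    have := hGdiff 0 1 le_rfl zero_le_one
    simpa [hG0] using this
  have hGM : Pbar * T ≤ G M := by
    have h := hGdiff 1 M zero_le_one hM1
    nlinarith
  -- IVT
  have hIVT := intermediate_value_Icc (le_trans zero_le_one hM1) hGcont.continuousOn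
  have hmem : Pbar * T ∈ Set.Icc (G 0) (G M) := by
    constructor
    · rw [hG0]; positivity
    · exact hGM
  obtain ⟨t₁, ht₁mem, hGt₁⟩ := hIVT hmem
  have ht₁pos : 0 < t₁ := by
    rcases lt_or_eq_of_le ht₁mem.1 with h | h
    · exact h
    · exfalso; rw [← h, hG0] at hGt₁; nlinarith
  refine ⟨t₁, ⟨ht₁pos, by rw [hFG]; exact hGt₁⟩, ?_⟩
  rintro t₂ ⟨ht₂pos, ht₂⟩
  rw [hFG] at ht₂
  exact hGmono.injOn (Set.mem_Ici.mpr ht₂pos.le) (Set.mem_Ici.mpr ht₁pos.le)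
    (ht₂.trans hGt₁.symm)
end

section
/- (Lemma 1, necessity direction, finite-user version.) Let ι be a finite index set and let S be a convex set of vectors x : ι → ℝ with x(i) > 0 for all i. Suppose x ∈ S satisfies Σ_{i∈ι} ln x(i) ≥ Σ_{i∈ι} ln y(i) for every y ∈ S. Then for every y ∈ S, Σ_{i∈ι} (y(i) − x(i))/x(i) ≤ 0. (A maximizer of the sum of logarithms of rates over a convex feasible rate region is proportionally fair.) -/
/-!
The gradient of `z ↦ ∑ i, log (z i)` at `x` is `(1 / x i)ᵢ`, so the claim is the first-order
optimality condition `⟪∇f x, y - x⟫ ≤ 0` for a maximizer `x` of `f` over a convex set.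
-/

open Real

theorem IsMaxOn.hasFDerivWithinAt_sub_nonpos_of_convex {E : Type*} [NormedAddCommGroup E]
    [NormedSpace ℝ E] {f : E → ℝ} {f' : StrongDual ℝ E} {s : Set E} {a y : E}
    (hs : Convex ℝ s) (hmax : IsMaxOn f s a) (hf : HasFDerivWithinAt f f' s a)
    (ha : a ∈ s) (hy : y ∈ s) : f' (y - a) ≤ 0 :=
  hmax.localize.hasFDerivWithinAt_nonpos hf
    (sub_mem_posTangentConeAt_of_segment_subset (hs.segment_subset ha hy))

theorem hasFDerivAt_sum_log {ι : Type*} [Fintype ι] {x : ι → ℝ} (hx : ∀ i, x i ≠ 0) :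
    HasFDerivAt (fun z : ι → ℝ => ∑ i, log (z i))
      (∑ i, (x i)⁻¹ • ContinuousLinearMap.proj (R := ℝ) (φ := fun _ : ι => ℝ) i) x :=
  HasFDerivAt.fun_sum fun i _ => (hasFDerivAt_apply i x).log (hx i)

/-- Lemma 1, necessity direction (finite-user version): a maximizer of the sum of
logarithms of rates over a convex feasible rate region contained in the positive
orthant is proportionally fair. -/
theorem log_max_implies_pf (ι : Type*) [Fintype ι] (S : Set (ι → ℝ))
    (hconv : Convex ℝ S) (hpos : ∀ x ∈ S, ∀ i, 0 < x i)
    (x : ι → ℝ) (hx : x ∈ S)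
    (hmax : ∀ y ∈ S, ∑ i, Real.log (y i) ≤ ∑ i, Real.log (x i)) :
    ∀ y ∈ S, ∑ i, (y i - x i) / x i ≤ 0 := by
  intro y hy
  have hderiv := hasFDerivAt_sum_log fun i => (hpos x hx i).ne'
  have hfirst_order :=
    IsMaxOn.hasFDerivWithinAt_sub_nonpos_of_convex hconv hmax hderiv.hasFDerivWithinAt hx hy
  simpa [div_eq_inv_mul] using hfirst_order
end
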